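/- arXiv:1501.06925 — 4 statements merged into one kernel-verified Lean document; each statement's English description precedes it below -/
import Mathlib

section
/- Let 𝓜 be the set of pairs (S, φ), where S is a finite subset of ℕ and φ : S → {red, blue}. Define Γ → Γ' if either S' = S ∪ {x} for some x ∉ S with φ'|_S = φ, or there exists i ∈ S with i+1 ∉ S such that S' = (S ∖ {i}) ∪ {i+1} and colors are transported along the replacement. Let ≤ be the partial order generated by these moves. Then (𝓜, ≤) is a noetherian poset, i.e., it contains no infinite antichain and no infinite strictly descending chain. -/
/-! By Higman's lemma. List the points of each `Γ` in decreasing order; comparing colored points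
by `(n, c) ≼ (m, d) ↔ n ≤ m ∧ c = d` is a well-quasi-order on `ℕ × Bool` (Dickson), so Higman
gives `i < j` such that the list of `Γ_i` embeds into a subsequence of the list of `Γ_j`. Such an
embedding is realised by moves, working from the largest point down: a matched point is shifted
up to its partner, through positions that are free because the larger points already sit in
their final places and the smaller ones are still below; an unmatched point of `Γ_j` is added. -/

/-- A two-colored finite subset of ℕ, encoded as a finite set of pairs `(n, color)`,
is a partial function: each element carries exactly one color. -/
def ColorFunctional (Γ : Finset (ℕ × Bool)) : Prop :=
  ∀ n c c', (n, c) ∈ Γ → (n, c') ∈ Γ → c = c'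

/-- `n` belongs to the underlying set of `Γ`. -/
def CSupp (Γ : Finset (ℕ × Bool)) (n : ℕ) : Prop := ∃ c, (n, c) ∈ Γ

/-- The moves: add a new element with an arbitrary color, or shift an element `i` to `i+1`
(keeping its color) when `i+1` is absent. -/
inductive CMove : Finset (ℕ × Bool) → Finset (ℕ × Bool) → Prop
  | add (Γ : Finset (ℕ × Bool)) (x : ℕ) (c : Bool) : ¬ CSupp Γ x →
      CMove Γ (insert (x, c) Γ)
  | shift (Γ : Finset (ℕ × Bool)) (i : ℕ) (c : Bool) : (i, c) ∈ Γ → ¬ CSupp Γ (i + 1) →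
      CMove Γ (insert (i + 1, c) (Γ.erase (i, c)))

open Relation

theorem ColorFunctional.mono {Γ Δ : Finset (ℕ × Bool)} (hΓ : ColorFunctional Γ) (h : Δ ⊆ Γ) :
    ColorFunctional Δ :=
  fun n _ _ hc hc' => hΓ n _ _ (h hc) (h hc')

theorem ColorFunctional.exists_list {Γ : Finset (ℕ × Bool)} (hΓ : ColorFunctional Γ) :
    ∃ L : List (ℕ × Bool), L.Pairwise (fun p q => q.1 < p.1) ∧ L.toFinset = Γ := by
  induction Γ using Finset.induction_on_max_value (ι := ℕ × Bool) Prod.fst with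
  | empty => exact ⟨[], .nil, rfl⟩
  | insert a Γ ha hmax ih =>
    obtain ⟨L, hL, rfl⟩ := ih (hΓ.mono (Finset.subset_insert a _))
    refine ⟨a :: L, List.pairwise_cons.2 ⟨fun x hx => ?_, hL⟩, by simp⟩
    have hx' : x ∈ L.toFinset := List.mem_toFinset.2 hx
    refine (hmax x hx').lt_of_ne fun hxa => ha ?_
    have hcol : x.2 = a.2 := hΓ x.1 _ _ (by simp [hx']) (by rw [hxa]; simp)
    rwa [← Prod.ext hxa hcol]

def ColorLE (p q : ℕ × Bool) : Prop := p.1 ≤ q.1 ∧ p.2 = q.2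

instance : IsPreorder (ℕ × Bool) ColorLE where
  refl _ := ⟨le_rfl, rfl⟩
  trans _ _ _ h₁ h₂ := ⟨h₁.1.trans h₂.1, h₁.2.trans h₂.2⟩

theorem partiallyWellOrderedOn_colorLE :
    (Set.univ : Set (ℕ × Bool)).PartiallyWellOrderedOn ColorLE := by
  rw [← Set.univ_prod_univ]
  exact .prod (Set.isPWO_of_wellQuasiOrderedLE Set.univ)
    (Set.Finite.partiallyWellOrderedOn (r := Eq) Set.finite_univ)

theorem List.SublistForall₂.forall_fst_lt {L M : List (ℕ × Bool)} (h : L.SublistForall₂ ColorLE M)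
    {n : ℕ} (hM : ∀ q ∈ M, q.1 < n) : ∀ p ∈ L, p.1 < n := by
  induction h with
  | nil => simp
  | cons hpq _ ih =>
    simp only [List.mem_cons, forall_eq_or_imp] at hM ⊢
    exact ⟨hpq.1.trans_lt hM.1, ih hM.2⟩
  | cons_right _ ih => exact ih fun q hq => hM q (List.mem_cons_of_mem _ hq)

theorem not_cSupp_of_forall_fst_ne {Γ : Finset (ℕ × Bool)} {n : ℕ} (h : ∀ x ∈ Γ, x.1 ≠ n) :
    ¬ CSupp Γ n :=
  fun ⟨_, hc⟩ => h _ hc rfl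

theorem CMove.insert_of_forall_fst_ne {Γ : Finset (ℕ × Bool)} {p : ℕ × Bool}
    (h : ∀ x ∈ Γ, x.1 ≠ p.1) : CMove Γ (insert p Γ) :=
  CMove.add Γ p.1 p.2 (not_cSupp_of_forall_fst_ne h)

theorem CMove.reflTransGen_shift {Γ : Finset (ℕ × Bool)} {i j : ℕ} {c : Bool} (hij : i ≤ j)
    (hi : (i, c) ∈ Γ) (hfree : ∀ x ∈ Γ, x.1 ≤ i ∨ j < x.1) :
    ReflTransGen CMove Γ (insert (j, c) (Γ.erase (i, c))) := by
  induction j, hij using Nat.le_induction with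
  | base => rw [Finset.insert_erase hi]
  | succ j hij ih =>
    have hj : (j, c) ∉ Γ.erase (i, c) := fun hj => by
      obtain ⟨hne, hjΓ⟩ := Finset.mem_erase.1 hj
      rcases hfree _ hjΓ with h | h
      · exact hne (by simp only [Prod.mk.injEq, and_true]; omega)
      · omega
    have hfresh : ∀ x ∈ insert (j, c) (Γ.erase (i, c)), x.1 ≠ j + 1 := by
      simp only [Finset.mem_insert, Finset.mem_erase]
      rintro x (rfl | ⟨-, hx⟩)
      · simp
      · have := hfree x hx; omega
    have hmove := CMove.shift _ j c (Finset.mem_insert_self _ _) (not_cSupp_of_forall_fst_ne hfresh)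
    rw [Finset.erase_insert hj] at hmove
    exact (ih fun x hx => (hfree x hx).imp_right (by omega)).tail hmove

theorem CMove.reflTransGen_insert_of_colorLE {Δ : Finset (ℕ × Bool)} {p q : ℕ × Bool}
    (hpq : ColorLE p q) (hΔ : ∀ x ∈ Δ, x.1 < p.1 ∨ q.1 < x.1) :
    ReflTransGen CMove (insert p Δ) (insert q Δ) := by
  have hp : p ∉ Δ := fun hp => by have := hΔ p hp; have := hpq.1; omega
  have hshift := CMove.reflTransGen_shift (c := p.2) hpq.1 (Finset.mem_insert_self p Δ) <| by
    simp only [Finset.mem_insert, forall_eq_or_imp, le_rfl, true_or, true_and]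
    exact fun x hx => (hΔ x hx).imp_left le_of_lt
  rwa [Prod.mk.eta, Finset.erase_insert hp, hpq.2, Prod.mk.eta] at hshift

theorem CMove.reflTransGen_union_of_sublistForall₂ {L M : List (ℕ × Bool)}
    (h : L.SublistForall₂ ColorLE M) (hL : L.Pairwise fun p q => q.1 < p.1)
    (hM : M.Pairwise fun p q => q.1 < p.1) (E : Finset (ℕ × Bool))
    (hE : ∀ e ∈ E, ∀ q ∈ M, q.1 < e.1) :
    ReflTransGen CMove (E ∪ L.toFinset) (E ∪ M.toFinset) := by
  induction M generalizing L E with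
  | nil => cases h; rfl
  | cons q M ih =>
    obtain ⟨hqM, hM⟩ := List.pairwise_cons.1 hM
    have hqE : ∀ e ∈ E, q.1 < e.1 := fun e he => hE e he q List.mem_cons_self
    have hE' : ∀ e ∈ insert q E, ∀ x ∈ M, x.1 < e.1 := by
      simp only [Finset.mem_insert, forall_eq_or_imp]
      exact ⟨hqM, fun e he x hx => hE e he x (List.mem_cons_of_mem _ hx)⟩
    suffices ∃ L' : List (ℕ × Bool), L'.SublistForall₂ ColorLE M ∧
        (L'.Pairwise fun p q => q.1 < p.1) ∧
        ReflTransGen CMove (E ∪ L.toFinset) (insert q (E ∪ L'.toFinset)) by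
      obtain ⟨L', h', hL', hstep⟩ := this
      rw [List.toFinset_cons, Finset.union_insert, ← Finset.insert_union]
      exact hstep.trans (Finset.insert_union q E _ ▸ ih h' hL' hM _ hE')
    have hadd (h : L.SublistForall₂ ColorLE M) : ReflTransGen CMove (E ∪ L.toFinset)
        (insert q (E ∪ L.toFinset)) := by
      refine .single (CMove.insert_of_forall_fst_ne fun x hx => ?_)
      rcases Finset.mem_union.1 hx with hx | hx
      · exact (hqE x hx).ne'
      · exact (h.forall_fst_lt hqM x (List.mem_toFinset.1 hx)).ne
    cases h with
    | nil => exact ⟨[], .nil, .nil, hadd .nil⟩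
    | cons_right h => exact ⟨L, h, hL, hadd h⟩
    | @cons p _ L' _ hpq h =>
      obtain ⟨hpL', hL'⟩ := List.pairwise_cons.1 hL
      refine ⟨L', h, hL', ?_⟩
      rw [List.toFinset_cons, Finset.union_insert]
      refine CMove.reflTransGen_insert_of_colorLE hpq fun x hx => ?_
      rcases Finset.mem_union.1 hx with hx | hx
      · exact .inr (hqE x hx)
      · exact .inl (hpL' x (List.mem_toFinset.1 hx))

/-- the poset of two-colored finite subsets of ℕ under the order generated by
the moves is noetherian (well-quasi-ordered): every infinite sequence contains `i < j`
with `Γ_i ≤ Γ_j`. -/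
theorem stmt2 (f : ℕ → Finset (ℕ × Bool)) (hf : ∀ n, ColorFunctional (f n)) :
    ∃ i j, i < j ∧ Relation.ReflTransGen CMove (f i) (f j) := by
  choose L hL hLf using fun n => (hf n).exists_list
  obtain ⟨i, j, hij, hsub⟩ := partiallyWellOrderedOn_colorLE.partiallyWellOrderedOn_sublistForall₂
    ColorLE (fun n => ⟨L n, fun x _ => Set.mem_univ x⟩)
  refine ⟨i, j, hij, ?_⟩
  simpa [hLf] using CMove.reflTransGen_union_of_sublistForall₂ hsub (hL i) (hL j) ∅ (by simp)
end

section
/- Let 𝓜 be the set of matchings on ℕ (graphs on vertex set ℕ in which every vertex has degree at most 1, with finitely many edges). Define the partial order ≤ generated by type I moves: (a) adding a single edge, or (b) replacing an edge (i,j) by (i,j+1) when the vertex j+1 is not incident to any edge. For n ≥ 3 define Γ_n to be the matching with edges (2i+1, 2i+4) for i = 0,…,n−2 together with the edge (2, 2n−1). Then the matchings Γ_n, for n ≥ 3, are pairwise incomparable under ≤; in particular (𝓜, ≤) is not a noetherian poset. -/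
/-- A finite matching on ℕ: a finite set of edges `(i, j)` with `i < j`, pairwise
vertex-disjoint. -/
def IsMatching (Γ : Finset (ℕ × ℕ)) : Prop :=
  (∀ e ∈ Γ, e.1 < e.2) ∧
  (∀ e ∈ Γ, ∀ e' ∈ Γ, e ≠ e' → e.1 ≠ e'.1 ∧ e.1 ≠ e'.2 ∧ e.2 ≠ e'.1 ∧ e.2 ≠ e'.2)

/-- The vertex `v` is incident to an edge of `Γ`. -/
def MIncident (Γ : Finset (ℕ × ℕ)) (v : ℕ) : Prop := ∃ e ∈ Γ, e.1 = v ∨ e.2 = v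

/-- Type I moves: add an edge, or shift one endpoint of an edge up by one when the new
vertex is unused (either endpoint may be shifted). -/
inductive MoveI : Finset (ℕ × ℕ) → Finset (ℕ × ℕ) → Prop
  | add (Γ : Finset (ℕ × ℕ)) (i j : ℕ) : i < j → ¬ MIncident Γ i → ¬ MIncident Γ j →
      MoveI Γ (insert (i, j) Γ)
  | shiftR (Γ : Finset (ℕ × ℕ)) (i j : ℕ) : (i, j) ∈ Γ → ¬ MIncident Γ (j + 1) →
      MoveI Γ (insert (i, j + 1) (Γ.erase (i, j)))
  | shiftL (Γ : Finset (ℕ × ℕ)) (i j : ℕ) : (i, j) ∈ Γ → ¬ MIncident Γ (i + 1) →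
      MoveI Γ (insert (i + 1, j) (Γ.erase (i, j)))

/-- The matching `Γ_n` (n ≥ 3), with edges `(2i+1, 2i+4)` for `i = 0, …, n-2` and the
edge `(2, 2n-1)`. -/
def Gam (n : ℕ) : Finset (ℕ × ℕ) :=
  insert (2, 2 * n - 1) ((Finset.range (n - 1)).image (fun i => (2 * i + 1, 2 * i + 4)))



def MCross (e f : ℕ × ℕ) : Prop :=
  (e.1 < f.1 ∧ f.1 < e.2 ∧ e.2 < f.2) ∨ (f.1 < e.1 ∧ e.1 < f.2 ∧ f.2 < e.2)

def MEmb (Γ Γ' : Finset (ℕ × ℕ)) : Prop :=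
  ∃ φ : ℕ × ℕ → ℕ × ℕ,
    (∀ e ∈ Γ, φ e ∈ Γ') ∧
    (∀ e ∈ Γ, ∀ f ∈ Γ, φ e = φ f → e = f) ∧
    (∀ e ∈ Γ, ∀ f ∈ Γ, (MCross e f ↔ MCross (φ e) (φ f)))

lemma not_inc {Γ : Finset (ℕ × ℕ)} {v : ℕ} (h : ¬ MIncident Γ v) {f : ℕ × ℕ}
    (hf : f ∈ Γ) : f.1 ≠ v ∧ f.2 ≠ v :=
  ⟨fun h1 => h ⟨f, hf, Or.inl h1⟩, fun h2 => h ⟨f, hf, Or.inr h2⟩⟩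

lemma step_matching {Γ Γ' : Finset (ℕ × ℕ)} (hM : IsMatching Γ) (mv : MoveI Γ Γ') :
    IsMatching Γ' := by
  obtain ⟨h1, h2⟩ := hM
  cases mv with
  | add i j hij hi hj =>
    constructor
    · intro e he
      rcases Finset.mem_insert.1 he with rfl | he
      · exact hij
      · exact h1 e he
    · intro e he f hf hne
      rcases Finset.mem_insert.1 he with rfl | he <;> rcases Finset.mem_insert.1 hf with rfl | hf
      · exact absurd rfl hne
      · exact ⟨((not_inc hi hf).1).symm, ((not_inc hi hf).2).symm,
          ((not_inc hj hf).1).symm, ((not_inc hj hf).2).symm⟩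
      · exact ⟨(not_inc hi he).1, (not_inc hj he).1, (not_inc hi he).2, (not_inc hj he).2⟩
      · exact h2 e he f hf hne
  | shiftR i j hmem hj =>
    have hij : i < j := h1 (i, j) hmem
    constructor
    · intro e he
      rcases Finset.mem_insert.1 he with rfl | he
      · exact Nat.lt_succ_of_lt hij
      · exact h1 e (Finset.mem_of_mem_erase he)
    · intro e he f hf hne
      rcases Finset.mem_insert.1 he with rfl | he <;> rcases Finset.mem_insert.1 hf with rfl | hf
      · exact absurd rfl hne
      · obtain ⟨hfne, hf⟩ := Finset.mem_erase.1 hf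
        have hd := h2 (i, j) hmem f hf (fun h => hfne h.symm)
        have hni := not_inc hj hf
        exact ⟨hd.1, hd.2.1, (hni.1).symm, (hni.2).symm⟩
      · obtain ⟨hene, he⟩ := Finset.mem_erase.1 he
        have hd := h2 e he (i, j) hmem hene
        have hni := not_inc hj he
        exact ⟨hd.1, hni.1, hd.2.2.1, hni.2⟩
      · exact h2 e (Finset.mem_of_mem_erase he) f (Finset.mem_of_mem_erase hf) hne
  | shiftL i j hmem hi =>
    have hij : i < j := h1 (i, j) hmem
    have hjne : j ≠ i + 1 := (not_inc hi hmem).2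
    constructor
    · intro e he
      rcases Finset.mem_insert.1 he with rfl | he
      · show i + 1 < j; omega
      · exact h1 e (Finset.mem_of_mem_erase he)
    · intro e he f hf hne
      rcases Finset.mem_insert.1 he with rfl | he <;> rcases Finset.mem_insert.1 hf with rfl | hf
      · exact absurd rfl hne
      · obtain ⟨hfne, hf⟩ := Finset.mem_erase.1 hf
        have hd := h2 (i, j) hmem f hf (fun h => hfne h.symm)
        have hni := not_inc hi hf
        exact ⟨(hni.1).symm, (hni.2).symm, hd.2.2.1, hd.2.2.2⟩
      · obtain ⟨hene, he⟩ := Finset.mem_erase.1 he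
        have hd := h2 e he (i, j) hmem hene
        have hni := not_inc hi he
        exact ⟨hni.1, hd.2.1, hni.2, hd.2.2.2⟩
      · exact h2 e (Finset.mem_of_mem_erase he) f (Finset.mem_of_mem_erase hf) hne

lemma step_emb {Γ Γ' : Finset (ℕ × ℕ)} (hM : IsMatching Γ) (mv : MoveI Γ Γ') :
    MEmb Γ Γ' := by
  cases mv with
  | add i j hij hi hj =>
    exact ⟨id, fun e he => Finset.mem_insert_of_mem he, fun e _ f _ h => h,
      fun _ _ _ _ => Iff.rfl⟩
  | shiftR i j hmem hj =>
    refine ⟨fun e => if e = (i, j) then (i, j + 1) else e, ?_, ?_, ?_⟩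
    · intro e he
      by_cases h : e = (i, j)
      beta_reduce
      · rw [if_pos h]; exact Finset.mem_insert_self _ _
      beta_reduce
      · rw [if_neg h]; exact Finset.mem_insert_of_mem (Finset.mem_erase.2 ⟨h, he⟩)
    · intro e he f hf hef
      by_cases h1 : e = (i, j) <;> by_cases h2 : f = (i, j)
      · rw [h1, h2]
      beta_reduce at hef
      · rw [if_pos h1, if_neg h2] at hef
        exact absurd (by rw [← hef]) (not_inc hj hf).2
      beta_reduce at hef
      · rw [if_neg h1, if_pos h2] at hef
        exact absurd (by rw [hef]) (not_inc hj he).2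
      beta_reduce at hef
      · rwa [if_neg h1, if_neg h2] at hef
    · intro e he f hf
      by_cases h1 : e = (i, j) <;> by_cases h2 : f = (i, j)
      · subst h2
        subst h1
        beta_reduce
        rw [if_pos rfl]
        simp only [MCross]; omega
      · subst h1
        beta_reduce
        rw [if_pos rfl, if_neg h2]
        obtain ⟨a, b⟩ := f
        have hd := hM.2 (i, j) hmem (a, b) hf (fun h => h2 h.symm)
        have hni := not_inc hj hf
        have hlt := hM.1 (a, b) hf
        have hij := hM.1 (i, j) hmem
        simp only [MCross] at *
        omega
      · subst h2
        beta_reduce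
        rw [if_neg h1, if_pos rfl]
        obtain ⟨a, b⟩ := e
        have hd := hM.2 (i, j) hmem (a, b) he (fun h => h1 h.symm)
        have hni := not_inc hj he
        have hlt := hM.1 (a, b) he
        have hij := hM.1 (i, j) hmem
        simp only [MCross] at *
        omega
      beta_reduce
      · rw [if_neg h1, if_neg h2]
  | shiftL i j hmem hi =>
    refine ⟨fun e => if e = (i, j) then (i + 1, j) else e, ?_, ?_, ?_⟩
    · intro e he
      by_cases h : e = (i, j)
      beta_reduce
      · rw [if_pos h]; exact Finset.mem_insert_self _ _
      beta_reduce
      · rw [if_neg h]; exact Finset.mem_insert_of_mem (Finset.mem_erase.2 ⟨h, he⟩)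
    · intro e he f hf hef
      by_cases h1 : e = (i, j) <;> by_cases h2 : f = (i, j)
      · rw [h1, h2]
      beta_reduce at hef
      · rw [if_pos h1, if_neg h2] at hef
        exact absurd (by rw [← hef]) (not_inc hi hf).1
      beta_reduce at hef
      · rw [if_neg h1, if_pos h2] at hef
        exact absurd (by rw [hef]) (not_inc hi he).1
      beta_reduce at hef
      · rwa [if_neg h1, if_neg h2] at hef
    · intro e he f hf
      by_cases h1 : e = (i, j) <;> by_cases h2 : f = (i, j)
      · subst h2
        subst h1
        beta_reduce
        rw [if_pos rfl]
        simp only [MCross]; omega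
      · subst h1
        beta_reduce
        rw [if_pos rfl, if_neg h2]
        obtain ⟨a, b⟩ := f
        have hd := hM.2 (i, j) hmem (a, b) hf (fun h => h2 h.symm)
        have hni := not_inc hi hf
        have hlt := hM.1 (a, b) hf
        have hij := hM.1 (i, j) hmem
        simp only [MCross] at *
        omega
      · subst h2
        beta_reduce
        rw [if_neg h1, if_pos rfl]
        obtain ⟨a, b⟩ := e
        have hd := hM.2 (i, j) hmem (a, b) he (fun h => h1 h.symm)
        have hni := not_inc hi he
        have hlt := hM.1 (a, b) he
        have hij := hM.1 (i, j) hmem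
        simp only [MCross] at *
        omega
      beta_reduce
      · rw [if_neg h1, if_neg h2]

lemma emb_trans {Γ Δ Δ' : Finset (ℕ × ℕ)} (h1 : MEmb Γ Δ) (h2 : MEmb Δ Δ') :
    MEmb Γ Δ' := by
  obtain ⟨φ, hφm, hφi, hφc⟩ := h1
  obtain ⟨ψ, hψm, hψi, hψc⟩ := h2
  refine ⟨ψ ∘ φ, fun e he => hψm _ (hφm e he), ?_, ?_⟩
  · intro e he f hf h
    exact hφi e he f hf (hψi _ (hφm e he) _ (hφm f hf) h)
  · intro e he f hf
    exact (hφc e he f hf).trans (hψc _ (hφm e he) _ (hφm f hf))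

lemma reach_inv {Γ Γ' : Finset (ℕ × ℕ)} (h : Relation.ReflTransGen MoveI Γ Γ')
    (hM : IsMatching Γ) : IsMatching Γ' ∧ MEmb Γ Γ' := by
  induction h with
  | refl => exact ⟨hM, id, fun e he => he, fun e _ f _ h => h, fun _ _ _ _ => Iff.rfl⟩
  | tail hab hbc ih =>
    exact ⟨step_matching ih.1 hbc, emb_trans ih.2 (step_emb ih.1 hbc)⟩

def gEdge (k i : ℕ) : ℕ × ℕ := if i + 1 < k then (2 * i + 1, 2 * i + 4) else (2, 2 * k - 1)

def MAdj (k i j : ℕ) : Prop :=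
  i + 1 = j ∨ j + 1 = i ∨ (i = 0 ∧ j + 1 = k) ∨ (j = 0 ∧ i + 1 = k)

lemma mem_Gam {k : ℕ} (hk : 3 ≤ k) {e : ℕ × ℕ} :
    e ∈ Gam k ↔ ∃ i < k, e = gEdge k i := by
  unfold Gam
  simp only [Finset.mem_insert, Finset.mem_image, Finset.mem_range]
  constructor
  · rintro (rfl | ⟨i, hi, rfl⟩)
    · exact ⟨k - 1, by omega, by unfold gEdge; rw [if_neg (by omega)]⟩
    · exact ⟨i, by omega, by unfold gEdge; rw [if_pos (by omega)]⟩
  · rintro ⟨i, hi, rfl⟩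
    unfold gEdge
    by_cases h : i + 1 < k
    · rw [if_pos h]; exact Or.inr ⟨i, by omega, rfl⟩
    · rw [if_neg h]; exact Or.inl rfl

lemma gEdge_inj {k i j : ℕ} (hk : 3 ≤ k) (hi : i < k) (hj : j < k)
    (h : gEdge k i = gEdge k j) : i = j := by
  unfold gEdge at h
  split_ifs at h <;> simp only [Prod.mk.injEq] at h <;> omega

lemma cross_gEdge {k i j : ℕ} (hk : 3 ≤ k) (hi : i < k) (hj : j < k) :
    MCross (gEdge k i) (gEdge k j) ↔ MAdj k i j := by
  unfold MCross gEdge MAdj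
  split_ifs <;> simp only [Prod.fst, Prod.snd] <;> omega

lemma matching_Gam {k : ℕ} (hk : 3 ≤ k) : IsMatching (Gam k) := by
  constructor
  · intro e he
    obtain ⟨i, hi, rfl⟩ := (mem_Gam hk).1 he
    unfold gEdge
    split_ifs <;> simp <;> omega
  · intro e he f hf hne
    obtain ⟨i, hi, rfl⟩ := (mem_Gam hk).1 he
    obtain ⟨j, hj, rfl⟩ := (mem_Gam hk).1 hf
    have hij : i ≠ j := fun h => hne (by rw [h])
    unfold gEdge
    split_ifs <;> simp <;> omega

lemma Gam_eq_image {k : ℕ} (hk : 3 ≤ k) :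
    Gam k = (Finset.range k).image (gEdge k) := by
  ext e
  rw [mem_Gam hk]
  simp only [Finset.mem_image, Finset.mem_range]
  constructor
  · rintro ⟨i, hi, rfl⟩; exact ⟨i, hi, rfl⟩
  · rintro ⟨i, hi, rfl⟩; exact ⟨i, hi, rfl⟩

lemma card_Gam {k : ℕ} (hk : 3 ≤ k) : (Gam k).card = k := by
  rw [Gam_eq_image hk, Finset.card_image_of_injOn, Finset.card_range]
  intro i hi j hj h
  exact gEdge_inj hk (Finset.mem_range.1 hi) (Finset.mem_range.1 hj) h

lemma cycle_nbrs {k i : ℕ} (hk : 3 ≤ k) (hi : i < k) :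
    ∃ a b, a < k ∧ b < k ∧ a ≠ b ∧ MAdj k i a ∧ MAdj k i b := by
  refine ⟨if i + 1 < k then i + 1 else 0, if i = 0 then k - 1 else i - 1,
    ?_, ?_, ?_, ?_, ?_⟩ <;> · first | (unfold MAdj; split_ifs <;> omega) | (split_ifs <;> omega)

lemma adj_two_sols {k j x : ℕ} (hk : 3 ≤ k) (hj : j < k) (hx : x < k)
    (h : MAdj k j x) : x = (if j + 1 < k then j + 1 else 0) ∨
      x = (if j = 0 then k - 1 else j - 1) := by
  unfold MAdj at h; split_ifs <;> omega

lemma no_reach {m n : ℕ} (hm : 3 ≤ m) (hn : 3 ≤ n) (hmn : m ≠ n) :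
    ¬ Relation.ReflTransGen MoveI (Gam m) (Gam n) := by
  intro h
  obtain ⟨-, φ, hmem, hinj, hcr⟩ := reach_inv h (matching_Gam hm)
  -- m ≤ n by injectivity
  have hcard1 : m ≤ n := by
    rw [← card_Gam hm, ← card_Gam hn]
    exact Finset.card_le_card_of_injOn φ hmem (fun a ha b hb => hinj a ha b hb)
  -- closure of the image under cycle adjacency
  have hstep : ∀ j < n, (∃ e ∈ Gam m, φ e = gEdge n j) →
      ∀ j' < n, MAdj n j j' → ∃ e ∈ Gam m, φ e = gEdge n j' := by
    rintro j hj ⟨e, he, hφe⟩ j' hj' hadj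
    obtain ⟨i, hi, rfl⟩ := (mem_Gam hm).1 he
    obtain ⟨a, b, ha, hb, hab, haa, hba⟩ := cycle_nbrs hm hi
    have hamem : gEdge m a ∈ Gam m := (mem_Gam hm).2 ⟨a, ha, rfl⟩
    have hbmem : gEdge m b ∈ Gam m := (mem_Gam hm).2 ⟨b, hb, rfl⟩
    obtain ⟨ja, hja, hφa⟩ := (mem_Gam hn).1 (hmem _ hamem)
    obtain ⟨jb, hjb, hφb⟩ := (mem_Gam hn).1 (hmem _ hbmem)
    have hca : MCross (gEdge n j) (gEdge n ja) := by
      rw [← hφe, ← hφa]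
      exact (hcr _ he _ hamem).1 ((cross_gEdge hm hi ha).2 haa)
    have hcb : MCross (gEdge n j) (gEdge n jb) := by
      rw [← hφe, ← hφb]
      exact (hcr _ he _ hbmem).1 ((cross_gEdge hm hi hb).2 hba)
    have hadja : MAdj n j ja := (cross_gEdge hn hj hja).1 hca
    have hadjb : MAdj n j jb := (cross_gEdge hn hj hjb).1 hcb
    have hjajb : ja ≠ jb := by
      intro hh
      apply hab
      apply gEdge_inj hm ha hb
      apply hinj _ hamem _ hbmem
      rw [hφa, hφb, hh]
    have h1 := adj_two_sols hn hj hja hadja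
    have h2 := adj_two_sols hn hj hjb hadjb
    have h3 := adj_two_sols hn hj hj' hadj
    have : j' = ja ∨ j' = jb := by omega
    rcases this with rfl | rfl
    · exact ⟨gEdge m a, hamem, hφa⟩
    · exact ⟨gEdge m b, hbmem, hφb⟩
  -- some index is in the image
  obtain ⟨j0, hj0, hj0im⟩ : ∃ j0 < n, ∃ e ∈ Gam m, φ e = gEdge n j0 := by
    have h0 : gEdge m 0 ∈ Gam m := (mem_Gam hm).2 ⟨0, by omega, rfl⟩
    obtain ⟨j0, hj0, hφ0⟩ := (mem_Gam hn).1 (hmem _ h0)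
    exact ⟨j0, hj0, gEdge m 0, h0, hφ0⟩
  -- going down
  have hdown : ∀ d j, j < n → (∃ e ∈ Gam m, φ e = gEdge n j) → d ≤ j →
      ∃ e ∈ Gam m, φ e = gEdge n (j - d) := by
    intro d
    induction d with
    | zero => intro j hj h _; simpa using h
    | succ d ih =>
      intro j hj h hd
      have h1 := ih j hj h (by omega)
      have h2 := hstep (j - d) (by omega) h1 (j - d - 1) (by omega)
        (by unfold MAdj; omega)
      have : j - (d + 1) = j - d - 1 := by omega
      rw [this]
      exact h2
  have him0 : ∃ e ∈ Gam m, φ e = gEdge n 0 := by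
    have := hdown j0 j0 hj0 hj0im le_rfl
    simpa using this
  have himtop : ∃ e ∈ Gam m, φ e = gEdge n (n - 1) :=
    hstep 0 (by omega) him0 (n - 1) (by omega) (by unfold MAdj; omega)
  have hall : ∀ j < n, ∃ e ∈ Gam m, φ e = gEdge n j := by
    intro j hj
    have := hdown (n - 1 - j) (n - 1) (by omega) himtop (by omega)
    have heq : n - 1 - (n - 1 - j) = j := by omega
    rwa [heq] at this
  -- n ≤ m by surjectivity
  have hcard2 : n ≤ m := by
    rw [← card_Gam hm, ← card_Gam hn]
    apply Finset.card_le_card_of_surjOn φ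
    intro f hf
    obtain ⟨j, hj, rfl⟩ := (mem_Gam hn).1 hf
    obtain ⟨e, he, hφe⟩ := hall j hj
    exact ⟨e, he, hφe⟩
  omega

/-- the `Γ_n` for `n ≥ 3` are pairwise incomparable under the order generated
by type I moves; in particular the poset of matchings on ℕ is not noetherian. -/
theorem stmt3 :
    (∀ m n : ℕ, 3 ≤ m → 3 ≤ n → m ≠ n →
      ¬ Relation.ReflTransGen MoveI (Gam m) (Gam n)) ∧
    ¬ (∀ f : ℕ → Finset (ℕ × ℕ), (∀ k, IsMatching (f k)) →
        ∃ i j, i < j ∧ Relation.ReflTransGen MoveI (f i) (f j)) := by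
  constructor
  · intro m n hm hn hmn
    exact no_reach hm hn hmn
  · intro h
    obtain ⟨i, j, hij, hr⟩ := h (fun k => Gam (k + 3)) (fun k => matching_Gam (by omega))
    exact no_reach (by omega) (by omega) (by omega) hr
end

section
/- Let R = ℂ[x_{i,j} : 1 ≤ i ≤ j ≤ n] and S = ℂ[b_{i,j} : 1 ≤ i ≤ j ≤ n], and define the ring homomorphism φ : R → S by φ(x_{i,j}) = Σ_{k ≤ min(i,j)} b_{k,i} b_{k,j} (with x_{i,j} = x_{j,i}). Let 𝔪 ⊂ R be the maximal ideal generated by x_{i,i} − 1 (1 ≤ i ≤ n) and x_{i,j} (i < j). Then φ is injective, and for every i < n, the element b_{i,i}² − 1 lies in the ideal of S generated by φ(𝔪), and b_{i,j} b_{i,k} lies in that ideal whenever (i,j) ≠ (i,i) or (i,k) ≠ (i,i) with j ≠ i or k ≠ i. -/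
/-- Index set for variables `x_{i,j}` (resp. `b_{i,j}`), `1 ≤ i ≤ j ≤ n`. -/
abbrev UIdx (n : ℕ) := {p : Fin n × Fin n // p.1 ≤ p.2}

/-- The homomorphism `φ : ℂ[x_{i,j}] → ℂ[b_{i,j}]`, `φ(x_{i,j}) = ∑_{k ≤ min(i,j)} b_{k,i} b_{k,j}`
(entries of `bᵀ b` for an upper-triangular `b`). -/
noncomputable def phiMap (n : ℕ) :
    MvPolynomial (UIdx n) ℂ →ₐ[ℂ] MvPolynomial (UIdx n) ℂ :=
  MvPolynomial.aeval (fun v =>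
    ∑ k : Fin n, if hk : k ≤ v.1.1 then
      MvPolynomial.X (⟨(k, v.1.1), hk⟩ : UIdx n) *
      MvPolynomial.X (⟨(k, v.1.2), hk.trans v.2⟩ : UIdx n)
    else 0)

/-- The maximal ideal `𝔪 = (x_{i,i} - 1, x_{i,j} (i < j))`. -/
noncomputable def mIdeal (n : ℕ) : Ideal (MvPolynomial (UIdx n) ℂ) :=
  Ideal.span
    ({q | ∃ i : Fin n, q = MvPolynomial.X (⟨(i, i), le_refl i⟩ : UIdx n) - 1} ∪
     {q | ∃ v : UIdx n, v.1.1 ≠ v.1.2 ∧ q = MvPolynomial.X v})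

/-!
Modulo the ideal `J = φ(𝔪) S`, the upper-triangular matrix `b = (b_{i,j})` satisfies `bᵀ b = 1`,
and over any commutative ring an upper-triangular matrix with `bᵀ b = 1` is diagonal with
`b_{i,i}² = 1`: going down the rows, row `i` meets the earlier rows only on the diagonal, so
`b_{i,i} b_{i,j} = δ_{i,j}`.

For injectivity we build a left inverse of `φ` over an algebraically closed field `K ⊇ R`.
In the localisation of `R` at the point `x = 1` the generic symmetric matrix `x` is congruent to
`1` modulo the maximal ideal, so its Cholesky pivots are units and `x = Uᵀ D U` with `U`
unitriangular. Taking square roots of the pivots in `K` gives an upper-triangular `B` with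
`Bᵀ B = x`, i.e. a ring map `τ : S → K` with `τ ∘ φ = (R ↪ K)`.
-/

namespace Matrix.BlockTriangular

variable {ι R : Type*} [Fintype ι] [LinearOrder ι] [CommRing R] {M : Matrix ι ι R}

theorem diag_mul_apply_of_transpose_mul_self_eq_one (hM : M.BlockTriangular id)
    (h : Mᵀ * M = 1) (i j : ι) : M i i * M i j = (1 : Matrix ι ι R) i j := by
  induction i using WellFoundedLT.induction generalizing j with
  | _ i ih =>
  have hcol : ∀ k < i, M k i = 0 := fun k hk => by
    have hkk := ih k hk k
    have hki := ih k hk i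
    rw [one_apply_eq] at hkk
    rw [one_apply_ne hk.ne] at hki
    linear_combination (-M k i) * hkk + M k k * hki
  rw [← h, mul_apply, Finset.sum_eq_single_of_mem i (Finset.mem_univ i)]
  · rfl
  · intro k _ hki
    rcases hki.lt_or_gt with hk | hk
    · rw [transpose_apply, hcol k hk, zero_mul]
    · rw [transpose_apply, hM hk, zero_mul]

theorem apply_eq_zero_of_transpose_mul_self_eq_one (hM : M.BlockTriangular id)
    (h : Mᵀ * M = 1) {i j : ι} (hij : i ≠ j) : M i j = 0 := by
  have hii := hM.diag_mul_apply_of_transpose_mul_self_eq_one h i i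
  have hij' := hM.diag_mul_apply_of_transpose_mul_self_eq_one h i j
  rw [one_apply_eq] at hii
  rw [one_apply_ne hij] at hij'
  linear_combination (-M i j) * hii + M i i * hij'

end Matrix.BlockTriangular

section Cholesky

open Matrix IsLocalRing

variable {A : Type*} [CommRing A] {n : ℕ}

/-- `choleskyRow X i j = d i * U i j` in the factorisation `X = Uᵀ (diagonal d) U` with `U`
unitriangular, so the pivots are `d i = choleskyRow X i i`. `Ring.inverse` is `0` on non-units;
this is harmless once the pivots are shown to be units. -/
noncomputable def choleskyRow (X : Fin n → Fin n → A) : Fin n → Fin n → A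
  | i, j => X i j - ∑ k : Fin n, if _ : k < i then
      choleskyRow X k i * choleskyRow X k j * Ring.inverse (choleskyRow X k k) else 0
termination_by i => i.1
decreasing_by all_goals assumption

theorem choleskyRow_eq (X : Fin n → Fin n → A) (i j : Fin n) :
    choleskyRow X i j = X i j - ∑ k : Fin n, if k < i then
      choleskyRow X k i * choleskyRow X k j * Ring.inverse (choleskyRow X k k) else 0 := by
  rw [choleskyRow]
  simp only [dite_eq_ite]

theorem sum_choleskyRow {X : Fin n → Fin n → A} (hunit : ∀ k, IsUnit (choleskyRow X k k))
    (i j : Fin n) :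
    ∑ k : Fin n, (if k ≤ i then
      choleskyRow X k i * choleskyRow X k j * Ring.inverse (choleskyRow X k k) else 0) = X i j := by
  set f := fun k => choleskyRow X k i * choleskyRow X k j * Ring.inverse (choleskyRow X k k)
  have hsplit : ∀ k, (if k ≤ i then f k else 0) =
      (if i = k then f k else 0) + (if k < i then f k else 0) := fun k => by
    rcases lt_trichotomy k i with h | rfl | h
    · rw [if_pos h.le, if_neg h.ne', if_pos h, zero_add]
    · simp
    · rw [if_neg (not_le.2 h), if_neg h.ne, if_neg (not_lt.2 h.le), add_zero]
  have hfi : f i = choleskyRow X i j := by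
    simp only [f]
    rw [mul_right_comm, Ring.mul_inverse_cancel _ (hunit i), one_mul]
  rw [Finset.sum_congr rfl fun k _ => hsplit k, Finset.sum_add_distrib, Finset.sum_ite_eq,
    if_pos (Finset.mem_univ i), hfi, choleskyRow_eq X i j, sub_add_cancel]

variable [IsLocalRing A]

theorem choleskyRow_sub_mem {X : Fin n → Fin n → A}
    (hX : ∀ i j, i < j → X i j ∈ maximalIdeal A) (i j : Fin n) :
    choleskyRow X i j - X i j ∈ maximalIdeal A := by
  induction i using WellFoundedLT.induction generalizing j with
  | _ i ih =>
  rw [choleskyRow_eq, sub_sub_cancel_left, neg_mem_iff]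
  refine Ideal.sum_mem _ fun k _ => ?_
  split_ifs with hk
  · have hki : choleskyRow X k i ∈ maximalIdeal A := by
      simpa using add_mem (ih k hk i) (hX k i hk)
    exact Ideal.mul_mem_right _ _ (Ideal.mul_mem_right _ _ hki)
  · exact zero_mem _

theorem isUnit_choleskyRow_self {X : Fin n → Fin n → A} (hdiag : ∀ i, IsUnit (X i i))
    (hX : ∀ i j, i < j → X i j ∈ maximalIdeal A) (i : Fin n) : IsUnit (choleskyRow X i i) := by
  by_contra hu
  rw [← notMem_maximalIdeal, not_not] at hu
  refine notMem_maximalIdeal.2 (hdiag i) ?_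
  simpa using sub_mem hu (choleskyRow_sub_mem hX i i)

theorem exists_transpose_mul_diagonal_mul_eq {X : Matrix (Fin n) (Fin n) A} (hsymm : X.IsSymm)
    (hdiag : ∀ i, IsUnit (X i i)) (hX : ∀ i j, i < j → X i j ∈ maximalIdeal A) :
    ∃ (d : Fin n → A) (U : Matrix (Fin n) (Fin n) A),
      U.BlockTriangular id ∧ Uᵀ * diagonal d * U = X := by
  set r := choleskyRow X
  have hunit := isUnit_choleskyRow_self hdiag hX
  set U : Matrix (Fin n) (Fin n) A :=
    of fun k i => if k ≤ i then Ring.inverse (r k k) * r k i else 0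
  have hU : U.BlockTriangular id := fun i j hji => by simp [U, not_le.2 (show j < i from hji)]
  have hupper : ∀ i j, i ≤ j → (Uᵀ * diagonal (fun k => r k k) * U) i j = X i j := by
    intro i j hij
    rw [← sum_choleskyRow hunit i j, mul_apply]
    refine Finset.sum_congr rfl fun k _ => ?_
    by_cases hk : k ≤ i
    · simp only [mul_diagonal, transpose_apply, U, of_apply, if_pos hk, if_pos (hk.trans hij)]
      linear_combination
        (r k i * r k j * Ring.inverse (r k k)) * Ring.inverse_mul_cancel _ (hunit k)
    · simp [U, hk]
  refine ⟨fun k => r k k, U, hU, ?_⟩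
  ext i j
  rcases le_total i j with hij | hji
  · exact hupper i j hij
  · have hsymm' : (Uᵀ * diagonal (fun k => r k k) * U).IsSymm := by
      simp [IsSymm, transpose_mul, Matrix.mul_assoc]
    rw [← hsymm'.apply, hupper j i hji, hsymm.apply]

theorem exists_blockTriangular_transpose_mul_self_eq {K : Type*} [Field K] [IsAlgClosed K]
    (ψ : A →+* K) {X : Matrix (Fin n) (Fin n) A} (hsymm : X.IsSymm)
    (hdiag : ∀ i, IsUnit (X i i)) (hX : ∀ i j, i < j → X i j ∈ maximalIdeal A) :
    ∃ B : Matrix (Fin n) (Fin n) K, B.BlockTriangular id ∧ Bᵀ * B = X.map ψ := by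
  obtain ⟨d, U, hU, rfl⟩ := exists_transpose_mul_diagonal_mul_eq hsymm hdiag hX
  choose s hs using fun k => IsAlgClosed.exists_eq_mul_self (ψ (d k))
  refine ⟨diagonal s * U.map ψ, (blockTriangular_diagonal s).mul (hU.map ψ), ?_⟩
  rw [Matrix.map_mul, Matrix.map_mul, transpose_map, diagonal_map (map_zero ψ), transpose_mul,
    diagonal_transpose, Matrix.mul_assoc, ← Matrix.mul_assoc (diagonal s), diagonal_mul_diagonal,
    ← Matrix.mul_assoc]
  simp only [hs]

end Cholesky

section GenericMatrices

open Matrix MvPolynomial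

variable (n : ℕ)

noncomputable def bMatrix : Matrix (Fin n) (Fin n) (MvPolynomial (UIdx n) ℂ) :=
  of fun i j => if h : i ≤ j then X ⟨(i, j), h⟩ else 0

noncomputable def xMatrix : Matrix (Fin n) (Fin n) (MvPolynomial (UIdx n) ℂ) :=
  of fun i j => if h : i ≤ j then X ⟨(i, j), h⟩ else X ⟨(j, i), le_of_not_ge h⟩

theorem bMatrix_blockTriangular : (bMatrix n).BlockTriangular id :=
  fun i j hji => by simp [bMatrix, not_le.2 (show j < i from hji)]

theorem xMatrix_isSymm : (xMatrix n).IsSymm := by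
  ext i j
  rcases lt_trichotomy i j with h | rfl | h
  · simp [xMatrix, h.le, not_le.2 h]
  · rfl
  · simp [xMatrix, h.le, not_le.2 h]

variable {n}

theorem phiMap_X (v : UIdx n) : phiMap n (X v) = ((bMatrix n)ᵀ * bMatrix n) v.1.1 v.1.2 := by
  obtain ⟨⟨i, j⟩, hij⟩ := v
  rw [phiMap, aeval_X, mul_apply]
  refine Finset.sum_congr rfl fun k _ => ?_
  by_cases hk : k ≤ i
  · simp [bMatrix, hk, hk.trans hij]
  · simp [bMatrix, hk]

theorem eval₂Hom_comp_phiMap {T : Type*} [CommRing T] (g : MvPolynomial (UIdx n) ℂ →+* T)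
    {B : Matrix (Fin n) (Fin n) T} (hB : B.BlockTriangular id)
    (hBB : Bᵀ * B = (xMatrix n).map g) :
    (eval₂Hom (g.comp C) fun v => B v.1.1 v.1.2).comp (phiMap n).toRingHom = g := by
  set τ := eval₂Hom (g.comp C) fun v : UIdx n => B v.1.1 v.1.2
  have hτb : (bMatrix n).map τ = B := by
    ext i j
    by_cases hij : i ≤ j
    · simp [bMatrix, hij, τ]
    · simp [bMatrix, hij, hB (not_le.1 hij)]
  refine MvPolynomial.ringHom_ext (fun r => ?_) fun v => ?_
  · show τ (phiMap n (C r)) = g (C r)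
    rw [← algebraMap_eq, AlgHom.commutes, algebraMap_eq]
    exact eval₂Hom_C _ _ _
  · obtain ⟨⟨i, j⟩, hij⟩ := v
    calc τ (phiMap n (X ⟨(i, j), hij⟩)) = ((bMatrix n)ᵀ * bMatrix n).map τ i j := by
          rw [phiMap_X]; rfl
      _ = g (X ⟨(i, j), hij⟩) := by
          rw [Matrix.map_mul, transpose_map, hτb, hBB]
          simp [xMatrix, hij]

theorem phiMap_injective : Function.Injective (phiMap n) := by
  -- localise at the point `x = 1`, where the Cholesky pivots of `x` do not vanish
  let P := RingHom.ker (eval fun v : UIdx n => (1 : Matrix (Fin n) (Fin n) ℂ) v.1.1 v.1.2)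
  have : P.IsPrime := RingHom.ker_isPrime _
  let A := Localization.AtPrime P
  let F := FractionRing (MvPolynomial (UIdx n) ℂ)
  let g := (algebraMap F (AlgebraicClosure F)).comp (algebraMap (MvPolynomial (UIdx n) ℂ) F)
  have hg : Function.Injective g :=
    (algebraMap F (AlgebraicClosure F)).injective.comp (IsFractionRing.injective _ F)
  let ψ : A →+* AlgebraicClosure F := IsLocalization.lift (M := P.primeCompl) (g := g)
    fun y => isUnit_iff_ne_zero.2 <| (map_ne_zero_iff g hg).2 fun hy => y.2 (hy ▸ P.zero_mem)
  have hdiag : ∀ i, IsUnit ((xMatrix n).map (algebraMap _ A) i i) := fun i => by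
    rw [map_apply, IsLocalization.AtPrime.isUnit_to_map_iff A P]
    simp [P, xMatrix]
  have hoff : ∀ i j, i < j →
      (xMatrix n).map (algebraMap _ A) i j ∈ IsLocalRing.maximalIdeal A := fun i j hij => by
    rw [map_apply, IsLocalization.AtPrime.to_map_mem_maximal_iff A P]
    simp [P, xMatrix, hij.le, hij.ne]
  obtain ⟨B, hB, hBB⟩ :=
    exists_blockTriangular_transpose_mul_self_eq ψ ((xMatrix_isSymm n).map _) hdiag hoff
  rw [Matrix.map_map, ← RingHom.coe_comp, IsLocalization.lift_comp] at hBB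
  have hfac := RingHom.congr_fun (eval₂Hom_comp_phiMap g hB hBB)
  intro p q hpq
  apply hg
  rw [← hfac, ← hfac, RingHom.comp_apply, RingHom.comp_apply, AlgHom.toRingHom_eq_coe,
    RingHom.coe_coe, hpq]

theorem mk_phiMap_X (v : UIdx n) :
    Ideal.Quotient.mk ((mIdeal n).map (phiMap n)) (phiMap n (X v)) =
      (1 : Matrix _ _ _) v.1.1 v.1.2 := by
  obtain ⟨⟨i, j⟩, hij⟩ := v
  by_cases h : i = j
  · subst h
    rw [one_apply_eq, ← map_one (Ideal.Quotient.mk _), Ideal.Quotient.eq, ← map_one (phiMap n),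
      ← map_sub]
    exact Ideal.mem_map_of_mem _ (Ideal.subset_span (Or.inl ⟨i, rfl⟩))
  · rw [one_apply_ne h, Ideal.Quotient.eq_zero_iff_mem]
    exact Ideal.mem_map_of_mem _ (Ideal.subset_span (Or.inr ⟨_, h, rfl⟩))

theorem transpose_mul_self_map_bMatrix_eq_one :
    ((bMatrix n).map (Ideal.Quotient.mk ((mIdeal n).map (phiMap n))))ᵀ *
      (bMatrix n).map (Ideal.Quotient.mk ((mIdeal n).map (phiMap n))) = 1 := by
  rw [← transpose_map, ← Matrix.map_mul]
  have hupper : ∀ i j, i ≤ j →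
      ((bMatrix n)ᵀ * bMatrix n).map (Ideal.Quotient.mk ((mIdeal n).map (phiMap n))) i j =
        (1 : Matrix _ _ _) i j := fun i j hij => by
    rw [map_apply, ← phiMap_X ⟨(i, j), hij⟩, mk_phiMap_X]
  ext i j
  rcases le_total i j with hij | hji
  · exact hupper i j hij
  · rw [← ((isSymm_transpose_mul_self _).map _).apply, hupper j i hji, isSymm_one.apply]

theorem X_sq_sub_one_mem_map_mIdeal (i : Fin n) :
    X ⟨(i, i), le_refl i⟩ ^ 2 - 1 ∈ (mIdeal n).map (phiMap n) := by
  rw [← Ideal.Quotient.eq, map_pow, map_one]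
  simpa [bMatrix, sq] using ((bMatrix_blockTriangular n).map _)
    |>.diag_mul_apply_of_transpose_mul_self_eq_one transpose_mul_self_map_bMatrix_eq_one i i

theorem X_mem_map_mIdeal (v : UIdx n) (hv : v.1.1 ≠ v.1.2) : X v ∈ (mIdeal n).map (phiMap n) := by
  obtain ⟨⟨i, j⟩, hij⟩ := v
  rw [← Ideal.Quotient.eq_zero_iff_mem]
  simpa [bMatrix, hij] using ((bMatrix_blockTriangular n).map _)
    |>.apply_eq_zero_of_transpose_mul_self_eq_one transpose_mul_self_map_bMatrix_eq_one hv

end GenericMatrices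

/-- `φ` is injective; `b_{i,i}² - 1` lies in the ideal generated by `φ(𝔪)`;
and `b_{i,j} b_{i,k}` lies in that ideal whenever `j ≠ i` or `k ≠ i`. -/
theorem stmt7 (n : ℕ) :
    Function.Injective (phiMap n) ∧
    (∀ i : Fin n,
      MvPolynomial.X (⟨(i, i), le_refl i⟩ : UIdx n) ^ 2 - 1 ∈ (mIdeal n).map (phiMap n)) ∧
    (∀ (i j k : Fin n) (hij : i ≤ j) (hik : i ≤ k), j ≠ i ∨ k ≠ i →
      MvPolynomial.X (⟨(i, j), hij⟩ : UIdx n) * MvPolynomial.X (⟨(i, k), hik⟩ : UIdx n) ∈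
        (mIdeal n).map (phiMap n)) := by
  refine ⟨phiMap_injective, X_sq_sub_one_mem_map_mIdeal, fun i j k hij hik hne => ?_⟩
  rcases hne with hj | hk
  · exact Ideal.mul_mem_right _ _ (X_mem_map_mIdeal ⟨(i, j), hij⟩ hj.symm)
  · exact Ideal.mul_mem_left _ _ (X_mem_map_mIdeal ⟨(i, k), hik⟩ hk.symm)
end

section
/- Let 𝓜 be the set of matchings on ℕ with the partial order ⊑ generated by type I moves (adding an edge; shifting an endpoint j of an edge to j+1 when j+1 is unused) and type II moves (for edges (k,i),(j,ℓ)→(k,j),(i,ℓ) or (i,k),(j,ℓ)→(i,j),(k,ℓ) under the interleaving and gap conditions described). Then for the matchings Γ_n (n ≥ 3) with edges (2i+1, 2i+4) for i = 0,…,n−2 and (2, 2n−1), one has Γ_n ⊑ Γ_m whenever 3 ≤ n < m. -/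
/-- Type II moves on matchings: for edges `e = (i,j)`, `e' = (k,ℓ)` with `i < j`, `k < ℓ`,
`j < ℓ`: (a) if `k < i < j < ℓ` and every vertex strictly between `k` and `i` lying on an
edge is matched to a vertex `> j`, replace `e, e'` by `(k,j), (i,ℓ)`; (b) if `i < k < j < ℓ`
and every vertex strictly between `k` and `j` lying on an edge is matched to a vertex `> j`,
replace `e, e'` by `(i,k), (j,ℓ)`. -/
inductive MoveII : Finset (ℕ × ℕ) → Finset (ℕ × ℕ) → Prop
  | nest (Γ : Finset (ℕ × ℕ)) (i j k l : ℕ) : (i, j) ∈ Γ → (k, l) ∈ Γ →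
      k < i → i < j → j < l →
      (∀ v, k < v → v < i → ∀ e ∈ Γ, (e.1 = v → j < e.2) ∧ (e.2 = v → j < e.1)) →
      MoveII Γ (insert (k, j) (insert (i, l) ((Γ.erase (i, j)).erase (k, l))))
  | cross (Γ : Finset (ℕ × ℕ)) (i j k l : ℕ) : (i, j) ∈ Γ → (k, l) ∈ Γ →
      i < k → k < j → j < l →
      (∀ v, k < v → v < j → ∀ e ∈ Γ, (e.1 = v → j < e.2) ∧ (e.2 = v → j < e.1)) →
      MoveII Γ (insert (i, k) (insert (j, l) ((Γ.erase (i, j)).erase (k, l))))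

/-!
It suffices to show `Γ_n ⊑ Γ_{n+1}`, using only shifts, one added edge and one nesting
move. Shifting the last chain edge `(2n-3, 2n)` and the long edge `(2, 2n-1)` two steps to
the right produces `wave n (n-2)`: the chain of `Γ_{n+1}` with its edges at positions `t`
and `t+1` merged into the single edge `(2t+1, 2t+6)`. Shifting `(2t+1, 2t+4)` right and
`(2t+3, 2t+8)` left by two each moves this merged edge one position to the left. When it
reaches `(1, 6)`, the vertices `3, 4` are free; adding `(3, 4)` and applying the nesting move
to `(3, 4), (1, 6)` splits it into `(1, 4), (3, 6)`, which gives `Γ_{n+1}`.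
-/

open Finset Relation

abbrev MoveStep (Γ Γ' : Finset (ℕ × ℕ)) : Prop := MoveI Γ Γ' ∨ MoveII Γ Γ'

local infix:50 " ⊑ " => ReflTransGen MoveStep

lemma shiftR_iterate {Γ : Finset (ℕ × ℕ)} {i j d : ℕ} (hij : i < j)
    (hfree : ∀ v, j ≤ v → v ≤ j + d → ¬ MIncident Γ v) :
    insert (i, j) Γ ⊑ insert (i, j + d) Γ := by
  induction d with
  | zero => rfl
  | succ d ih =>
    refine (ih fun v h₁ h₂ => hfree v h₁ (by omega)).tail (Or.inl ?_)
    have hnot : (i, j + d) ∉ Γ := fun h => hfree (j + d) (by omega) (by omega) ⟨_, h, .inr rfl⟩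
    have hmove := MoveI.shiftR (insert (i, j + d) Γ) i (j + d) (mem_insert_self _ _) (by
      rintro ⟨e, he, hv⟩
      rcases mem_insert.1 he with rfl | he
      · omega
      · exact hfree (j + d + 1) (by omega) (by omega) ⟨e, he, hv⟩)
    rwa [erase_insert hnot] at hmove

lemma shiftL_iterate {Γ : Finset (ℕ × ℕ)} {i j d : ℕ} (hij : i + d < j)
    (hfree : ∀ v, i ≤ v → v ≤ i + d → ¬ MIncident Γ v) :
    insert (i, j) Γ ⊑ insert (i + d, j) Γ := by
  induction d with
  | zero => rfl
  | succ d ih =>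
    refine (ih (by omega) fun v h₁ h₂ => hfree v h₁ (by omega)).tail (Or.inl ?_)
    have hnot : (i + d, j) ∉ Γ := fun h => hfree (i + d) (by omega) (by omega) ⟨_, h, .inl rfl⟩
    have hmove := MoveI.shiftL (insert (i + d, j) Γ) (i + d) j (mem_insert_self _ _) (by
      rintro ⟨e, he, hv⟩
      rcases mem_insert.1 he with rfl | he
      · omega
      · exact hfree (i + d + 1) (by omega) (by omega) ⟨e, he, hv⟩)
    rwa [erase_insert hnot] at hmove

def chain (a b : ℕ) : Finset (ℕ × ℕ) := (Ico a b).image fun i => (2 * i + 1, 2 * i + 4)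

lemma mem_chain {a b x y : ℕ} :
    (x, y) ∈ chain a b ↔ x % 2 = 1 ∧ y = x + 3 ∧ 2 * a < x ∧ x < 2 * b := by
  simp only [chain, mem_image, mem_Ico, Prod.mk.injEq]
  constructor
  · rintro ⟨i, hi, rfl, rfl⟩
    omega
  · rintro ⟨h₁, rfl, h₂, h₃⟩
    exact ⟨x / 2, by omega, by omega, by omega⟩

lemma gam_eq (n : ℕ) : Gam n = insert (2, 2 * n - 1) (chain 0 (n - 1)) := by
  rw [Gam, chain, range_eq_Ico]

def wave (n t : ℕ) : Finset (ℕ × ℕ) :=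
  insert (2, 2 * n + 1) (insert (2 * t + 1, 2 * t + 6) (chain 0 t ∪ chain (t + 2) n))

lemma gam_le_wave {n : ℕ} (hn : 3 ≤ n) : Gam n ⊑ wave n (n - 2) := by
  set Δ := chain 0 (n - 2)
  calc Gam n = insert (2 * n - 3, 2 * n) (insert (2, 2 * n - 1) Δ) := by
        ext ⟨x, y⟩
        simp only [gam_eq, Δ, mem_insert, mem_chain, Prod.mk.injEq]
        omega
    _ ⊑ insert (2 * n - 3, 2 * n + 2) (insert (2, 2 * n - 1) Δ) := by
        refine shiftR_iterate (by omega) ?_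
        rintro v h₁ h₂ ⟨⟨x, y⟩, he, hv⟩
        simp only [Δ, mem_insert, mem_chain, Prod.mk.injEq] at he
        omega
    _ = insert (2, 2 * n - 1) (insert (2 * n - 3, 2 * n + 2) Δ) := insert_comm _ _ _
    _ ⊑ insert (2, 2 * n - 1 + 2) (insert (2 * n - 3, 2 * n + 2) Δ) := by
        refine shiftR_iterate (by omega) ?_
        rintro v h₁ h₂ ⟨⟨x, y⟩, he, hv⟩
        simp only [Δ, mem_insert, mem_chain, Prod.mk.injEq] at he
        omega
    _ = wave n (n - 2) := by
        ext ⟨x, y⟩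
        simp only [wave, Δ, mem_insert, mem_union, mem_chain, Prod.mk.injEq]
        omega

lemma wave_succ_le {n t : ℕ} (ht : t + 3 ≤ n) : wave n (t + 1) ⊑ wave n t := by
  set Δ := insert (2, 2 * n + 1) (chain 0 t ∪ chain (t + 3) n)
  calc wave n (t + 1) = insert (2 * t + 1, 2 * t + 4) (insert (2 * t + 3, 2 * t + 8) Δ) := by
        ext ⟨x, y⟩
        simp only [wave, Δ, mem_insert, mem_union, mem_chain, Prod.mk.injEq]
        omega
    _ ⊑ insert (2 * t + 1, 2 * t + 4 + 2) (insert (2 * t + 3, 2 * t + 8) Δ) := by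
        refine shiftR_iterate (by omega) ?_
        rintro v h₁ h₂ ⟨⟨x, y⟩, he, hv⟩
        simp only [Δ, mem_insert, mem_union, mem_chain, Prod.mk.injEq] at he
        omega
    _ = insert (2 * t + 3, 2 * t + 8) (insert (2 * t + 1, 2 * t + 4 + 2) Δ) := insert_comm _ _ _
    _ ⊑ insert (2 * t + 3 + 2, 2 * t + 8) (insert (2 * t + 1, 2 * t + 4 + 2) Δ) := by
        refine shiftL_iterate (by omega) ?_
        rintro v h₁ h₂ ⟨⟨x, y⟩, he, hv⟩
        simp only [Δ, mem_insert, mem_union, mem_chain, Prod.mk.injEq] at he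
        omega
    _ = wave n t := by
        ext ⟨x, y⟩
        simp only [wave, Δ, mem_insert, mem_union, mem_chain, Prod.mk.injEq]
        omega

lemma wave_le_wave_zero {n : ℕ} : ∀ t, t + 2 ≤ n → wave n t ⊑ wave n 0
  | 0, _ => .refl
  | t + 1, ht => (wave_succ_le ht).trans (wave_le_wave_zero t (by omega))

lemma wave_zero_le {n : ℕ} (hn : 2 ≤ n) : wave n 0 ⊑ Gam (n + 1) := by
  set Δ := insert (2, 2 * n + 1) (chain 2 n)
  have hwave : wave n 0 = insert (1, 6) Δ := by
    ext ⟨x, y⟩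
    simp only [wave, Δ, mem_insert, mem_union, mem_chain, Prod.mk.injEq]
    omega
  have hadd : MoveI (insert (1, 6) Δ) (insert (3, 4) (insert (1, 6) Δ)) := by
    refine .add _ 3 4 (by omega) ?_ ?_ <;>
    · rintro ⟨⟨x, y⟩, he, hv⟩
      simp only [Δ, mem_insert, mem_chain, Prod.mk.injEq] at he
      omega
  have hnest := MoveII.nest (insert (3, 4) (insert (1, 6) Δ)) 3 4 1 6 (by simp) (by simp)
    (by omega) (by omega) (by omega) (by
      rintro v h₁ h₂ ⟨x, y⟩ he
      simp only [Δ, mem_insert, mem_chain, Prod.mk.injEq] at he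
      omega)
  have hgam : insert (1, 4) (insert (3, 6)
      (((insert (3, 4) (insert (1, 6) Δ)).erase (3, 4)).erase (1, 6))) = Gam (n + 1) := by
    ext ⟨x, y⟩
    simp only [gam_eq, Δ, mem_insert, mem_erase, ne_eq, mem_chain, Prod.mk.injEq]
    omega
  rw [hwave, ← hgam]
  exact .tail (.single (.inl hadd)) (.inr hnest)

lemma gam_le_gam_succ {n : ℕ} (hn : 3 ≤ n) : Gam n ⊑ Gam (n + 1) :=
  (gam_le_wave hn).trans <| (wave_le_wave_zero _ (by omega)).trans (wave_zero_le (by omega))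

/-- under the order `⊑` generated by type I and type II moves, one has
`Γ_n ⊑ Γ_m` whenever `3 ≤ n < m`. -/
theorem stmt13 (n m : ℕ) (hn : 3 ≤ n) (hnm : n < m) :
    Relation.ReflTransGen (fun Γ Γ' => MoveI Γ Γ' ∨ MoveII Γ Γ') (Gam n) (Gam m) := by
  induction m, hnm using Nat.le_induction with
  | base => exact gam_le_gam_succ hn
  | succ m hm ih => exact ih.trans (gam_le_gam_succ (by omega))
end
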